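/- arXiv:1702.03382 — 4 statements merged into one kernel-verified Lean document; each statement's English description precedes it below -/
import Mathlib

section
/- For every z with 0 ≤ z < 1, ₂F₁(1/2, 1/2; 3/2; z) = arcsin(√z)/√z (with value 1 at z=0); equivalently ∫₀¹ (1−t²z)^{-1/2} dt = arcsin(√z)/√z. -/
/-!
Since `c = b + 1`, the Euler integral reduces to `(1/2) ∫₀¹ t^(-1/2) (1 - t z)^(-1/2) dt`, and the
substitution `t = s²` turns it into `∫₀¹ (1 - s² z)^(-1/2) ds`. For `z = a²` with `0 < a < 1`, the
integrand is the derivative of `s ↦ arcsin (s a) / a`.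
-/

open Real intervalIntegral

/-- Gauss hypergeometric function `₂F₁(a,b;c;z)` via the Euler integral
representation (valid for `c > b > 0`). -/
noncomputable def hyp2F1 (a b c z : ℝ) : ℝ :=
  Real.Gamma c / (Real.Gamma b * Real.Gamma (c - b)) *
    ∫ t in (0:ℝ)..1, t ^ (b - 1) * (1 - t) ^ (c - b - 1) * (1 - t * z) ^ (-a)

open MeasureTheory Set

theorem hyp2F1_add_one (a z : ℝ) {b : ℝ} (hb : 0 < b) :
    hyp2F1 a b (b + 1) z = b * ∫ t in (0:ℝ)..1, t ^ (b - 1) * (1 - t * z) ^ (-a) := by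
  simp only [hyp2F1, add_sub_cancel_left, sub_self, rpow_zero, mul_one, Gamma_one,
    Gamma_add_one hb.ne', mul_div_cancel_right₀ _ (Gamma_pos_of_pos hb).ne']

theorem integral_rpow_neg_half_mul_eq (g : ℝ → ℝ) {b : ℝ} (hb : 0 ≤ b) :
    ∫ t in (0:ℝ)..b ^ 2, t ^ (-(1/2) : ℝ) * g t = 2 * ∫ s in (0:ℝ)..b, g (s ^ 2) := by
  have hsubst := integral_Icc_deriv_smul_of_deriv_nonneg (f := fun s : ℝ => s ^ 2)
    (f' := fun s => 2 * s) (g := fun t => t ^ (-(1/2) : ℝ) * g t) (by fun_prop)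
    (fun s _ => by simpa using hasDerivAt_pow 2 s) (fun s hs => by linarith [hs.1]) hb
  have hcancel : ∀ s ∈ Ioc (0:ℝ) b,
      2 * s * ((s ^ 2) ^ (-(1/2) : ℝ) * g (s ^ 2)) = 2 * g (s ^ 2) := by
    intro s hs
    rw [rpow_neg (sq_nonneg s), ← sqrt_eq_rpow, sqrt_sq hs.1.le]
    field_simp [hs.1.ne']
  rw [integral_of_le (sq_nonneg b), integral_of_le hb, ← integral_Icc_eq_integral_Ioc,
    ← MeasureTheory.integral_const_mul, ← setIntegral_congr_fun measurableSet_Ioc hcancel,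
    ← integral_Icc_eq_integral_Ioc]
  simpa using hsubst.symm

theorem hasDerivAt_arcsin_mul_div {a t : ℝ} (ha : a ≠ 0) (hta : |t * a| < 1) :
    HasDerivAt (fun t => arcsin (t * a) / a) ((1 - t ^ 2 * a ^ 2) ^ (-(1/2) : ℝ)) t := by
  obtain ⟨hlo, hhi⟩ := abs_lt.1 hta
  have hpos : 0 < 1 - t ^ 2 * a ^ 2 := by nlinarith
  refine (((hasDerivAt_arcsin hlo.ne' hhi.ne).comp t
    ((hasDerivAt_id t).mul_const a)).div_const a).congr_deriv ?_
  rw [rpow_neg hpos.le, ← sqrt_eq_rpow, mul_pow]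
  field_simp

theorem integral_one_sub_sq_mul_sq_rpow_neg_half {a : ℝ} (ha : a ≠ 0) (ha1 : |a| < 1) :
    ∫ t in (0:ℝ)..1, (1 - t ^ 2 * a ^ 2) ^ (-(1/2) : ℝ) = arcsin a / a := by
  have hbound : ∀ t ∈ uIcc (0:ℝ) 1, |t * a| < 1 := by
    intro t ht
    rw [uIcc_of_le zero_le_one] at ht
    rw [abs_mul, abs_of_nonneg ht.1]
    nlinarith [abs_nonneg a, ht.2]
  have hcont : ContinuousOn (fun t : ℝ => (1 - t ^ 2 * a ^ 2) ^ (-(1/2) : ℝ)) (uIcc 0 1) := by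
    refine ContinuousOn.rpow_const (by fun_prop) fun t ht => Or.inl ?_
    have := hbound t ht
    rw [abs_lt] at this
    nlinarith
  rw [integral_eq_sub_of_hasDerivAt (fun t ht => hasDerivAt_arcsin_mul_div ha (hbound t ht))
    hcont.intervalIntegrable]
  simp

theorem stmt1 (z : ℝ) (hz0 : 0 ≤ z) (hz1 : z < 1) :
    hyp2F1 (1/2) (1/2) (3/2) z =
      (if z = 0 then 1 else Real.arcsin (Real.sqrt z) / Real.sqrt z) ∧
    (∫ t in (0:ℝ)..1, (1 - t ^ 2 * z) ^ (-(1/2) : ℝ)) =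
      (if z = 0 then 1 else Real.arcsin (Real.sqrt z) / Real.sqrt z) := by
  have hintegral : (∫ t in (0:ℝ)..1, (1 - t ^ 2 * z) ^ (-(1/2) : ℝ)) =
      (if z = 0 then 1 else Real.arcsin (Real.sqrt z) / Real.sqrt z) := by
    split_ifs with hz
    · simp [hz]
    · have hsqrt_lt : |√z| < 1 := by
        rwa [abs_of_nonneg (sqrt_nonneg z), sqrt_lt' one_pos, one_pow]
      simpa [sq_sqrt hz0] using
        integral_one_sub_sq_mul_sq_rpow_neg_half (sqrt_ne_zero'.2 (hz0.lt_of_ne' hz)) hsqrt_lt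
  refine ⟨?_, hintegral⟩
  rw [← hintegral, show (3/2 : ℝ) = 1/2 + 1 by norm_num, hyp2F1_add_one _ _ one_half_pos,
    show (1/2 : ℝ) - 1 = -(1/2) by norm_num]
  have hsubst := integral_rpow_neg_half_mul_eq (fun t => (1 - t * z) ^ (-(1/2) : ℝ)) zero_le_one
  rw [one_pow] at hsubst
  rw [hsubst]
  ring
end

section
/- Let Λ : (-∞, π²/(2σ²)) → ℝ be defined by Λ(θ) = (√(2θ)/σ)·tan(σ√(2θ)/2)·S₀ for 0 ≤ θ < π²/(2σ²) and Λ(θ) = −(√(−2θ)/σ)·tanh(σ√(−2θ)/2)·S₀ for θ ≤ 0, where σ, S₀ > 0. Then Λ is differentiable on its domain (including at θ = 0), and Λ'(θ) → +∞ as θ ↑ π²/(2σ²). -/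
open Real Filter

/-- The limiting cumulant generating function of `(1/T)∫₀ᵀ S_t dt` in the
square-root (CEV `β = 1/2`) model, on its finiteness domain `θ < π²/(2σ²)`. -/
noncomputable def cumulantSqrt (σ S₀ θ : ℝ) : ℝ :=
  if 0 ≤ θ then Real.sqrt (2 * θ) / σ * Real.tan (σ * Real.sqrt (2 * θ) / 2) * S₀
  else -Real.sqrt (-2 * θ) / σ * Real.tanh (σ * Real.sqrt (-2 * θ) / 2) * S₀

open Topology

/-!
With `u = σ √(2θ) / 2`, both branches give `Λ(θ) / θ = S₀ · g(u) / u` with `g = tan` for `θ > 0`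
and `g = tanh` for `θ < 0`. Since `tan` and `tanh` vanish at `0` with derivative `1`, both
one-sided difference quotients at `0` tend to `S₀`, so `Λ` is differentiable there. Away from `0`
the chain rule applies, because `u < π/2` on the domain keeps `cos u ≠ 0`. For `θ > 0`,
`Λ'(θ) = S₀ (tan u / (2u) + 1 / (2 cos² u)) ≥ S₀ tan u / π`, which tends to `+∞` as `u ↑ π/2`.
-/

theorem Real.hasDerivAt_tanh (x : ℝ) : HasDerivAt tanh (1 / cosh x ^ 2) x := by
  have h := (hasDerivAt_sinh x).div (hasDerivAt_cosh x) (cosh_pos x).ne'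
  rw [show sinh / cosh = tanh from funext fun y => (tanh_eq_sinh_div_cosh y).symm] at h
  refine h.congr_deriv ?_
  rw [← cosh_sq_sub_sinh_sq x]
  ring

noncomputable def sqrtBranch (g : ℝ → ℝ) (σ θ : ℝ) : ℝ :=
  √(2 * θ) / σ * g (σ * √(2 * θ) / 2)

section
variable {σ S₀ θ : ℝ}

theorem cumulantSqrt_of_nonneg (hθ : 0 ≤ θ) :
    cumulantSqrt σ S₀ θ = sqrtBranch tan σ θ * S₀ :=
  if_pos hθ

theorem cumulantSqrt_of_neg (hθ : θ < 0) :
    cumulantSqrt σ S₀ θ = -(sqrtBranch tanh σ (-θ) * S₀) := by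
  simp only [cumulantSqrt, if_neg hθ.not_ge, sqrtBranch, mul_neg, neg_mul, neg_div]

theorem sqrtBranch_div_self (g : ℝ → ℝ) (hσ : σ ≠ 0) (hθ : 0 < θ) :
    sqrtBranch g σ θ / θ = g (σ * √(2 * θ) / 2) / (σ * √(2 * θ) / 2) := by
  have hs : √(2 * θ) ^ 2 = 2 * θ := sq_sqrt (by linarith)
  have hs0 : √(2 * θ) ≠ 0 := (sqrt_pos.2 (by linarith)).ne'
  rw [sqrtBranch]
  generalize g (σ * √(2 * θ) / 2) = y
  field_simp
  linear_combination y * hs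

theorem tendsto_mul_sqrt_two_mul_nhdsNE (hσ : σ ≠ 0) :
    Tendsto (fun θ => σ * √(2 * θ) / 2) (𝓝[>] 0) (𝓝[≠] 0) := by
  refine tendsto_nhdsWithin_of_tendsto_nhds_of_eventually_within _ ?_ ?_
  · have h : Continuous fun θ : ℝ => σ * √(2 * θ) / 2 := by fun_prop
    simpa using h.continuousWithinAt.tendsto (x := 0) (s := Set.Ioi 0)
  · filter_upwards [self_mem_nhdsWithin] with θ (hθ : 0 < θ)
    have := (sqrt_pos.2 (by linarith : 0 < 2 * θ)).ne'
    exact (by positivity : σ * √(2 * θ) / 2 ≠ 0)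

theorem tendsto_sqrtBranch_div_self {g : ℝ → ℝ} (hσ : σ ≠ 0) (hg : HasDerivAt g 1 0)
    (hg0 : g 0 = 0) : Tendsto (fun θ => sqrtBranch g σ θ / θ) (𝓝[>] 0) (𝓝 1) := by
  have hslope : Tendsto (fun v => g v / v) (𝓝[≠] 0) (𝓝 1) := by
    simpa [hg0, div_eq_inv_mul] using hg.tendsto_slope_zero
  refine (hslope.comp (tendsto_mul_sqrt_two_mul_nhdsNE hσ)).congr' ?_
  filter_upwards [self_mem_nhdsWithin] with θ (hθ : 0 < θ)
  exact (sqrtBranch_div_self g hσ hθ).symm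

theorem hasDerivAt_sqrtBranch {g : ℝ → ℝ} {g' : ℝ} (hσ : σ ≠ 0) (hθ : 0 < θ)
    (hg : HasDerivAt g g' (σ * √(2 * θ) / 2)) :
    HasDerivAt (sqrtBranch g σ) (g (σ * √(2 * θ) / 2) / (σ * √(2 * θ)) + g' / 2) θ := by
  have hs0 : √(2 * θ) ≠ 0 := (sqrt_pos.2 (by linarith)).ne'
  have hsqrt := ((hasDerivAt_id' θ).const_mul 2).sqrt (by linarith)
  have h := (hsqrt.div_const σ).fun_mul (hg.comp θ ((hsqrt.const_mul σ).div_const 2))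
  refine h.congr_deriv ?_
  rw [Function.comp_apply]
  field_simp

theorem hasDerivAt_cumulantSqrt_zero (hσ : σ ≠ 0) : HasDerivAt (cumulantSqrt σ S₀) S₀ 0 := by
  have hzero : cumulantSqrt σ S₀ 0 = 0 := by simp [cumulantSqrt]
  have htan := tendsto_sqrtBranch_div_self hσ (by simpa using hasDerivAt_tan (x := 0) (by simp))
    tan_zero
  have htanh := tendsto_sqrtBranch_div_self hσ (by simpa using hasDerivAt_tanh 0) tanh_zero
  have hneg : Tendsto (fun θ : ℝ => -θ) (𝓝[<] 0) (𝓝[>] 0) := by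
    refine tendsto_nhdsWithin_of_tendsto_nhds_of_eventually_within _ ?_ ?_
    · simpa using (continuous_neg (G := ℝ)).continuousWithinAt.tendsto (x := 0) (s := Set.Iio 0)
    · filter_upwards [self_mem_nhdsWithin] with θ (hθ : θ < 0)
      exact neg_pos.2 hθ
  rw [hasDerivAt_iff_tendsto_slope_left_right]
  constructor
  · have hleft := (htanh.comp hneg).mul_const S₀
    rw [one_mul] at hleft
    refine hleft.congr' ?_
    filter_upwards [self_mem_nhdsWithin] with θ (hθ : θ < 0)
    simp only [Function.comp_apply, slope_def_field, cumulantSqrt_of_neg hθ, hzero, sub_zero]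
    ring
  · have hright := htan.mul_const S₀
    rw [one_mul] at hright
    refine hright.congr' ?_
    filter_upwards [self_mem_nhdsWithin] with θ (hθ : 0 < θ)
    simp only [slope_def_field, cumulantSqrt_of_nonneg hθ.le, hzero, sub_zero]
    ring

theorem mul_sqrt_two_mul_lt_pi (hσ : 0 < σ) (hθ : θ < π ^ 2 / (2 * σ ^ 2)) :
    σ * √(2 * θ) < π := by
  rw [← lt_div_iff₀' hσ, sqrt_lt' (by positivity), div_pow, lt_div_iff₀ (by positivity)]
  rw [lt_div_iff₀ (by positivity)] at hθ
  linarith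

theorem mul_sqrt_two_mul_eq_pi (hσ : 0 < σ) : σ * √(2 * (π ^ 2 / (2 * σ ^ 2))) = π := by
  rw [show 2 * (π ^ 2 / (2 * σ ^ 2)) = (π / σ) ^ 2 by field_simp, sqrt_sq (by positivity)]
  field_simp

theorem hasDerivAt_cumulantSqrt_of_pos (hσ : 0 < σ) (hθ : 0 < θ)
    (hθb : θ < π ^ 2 / (2 * σ ^ 2)) :
    HasDerivAt (cumulantSqrt σ S₀)
      ((tan (σ * √(2 * θ) / 2) / (σ * √(2 * θ)) + 1 / cos (σ * √(2 * θ) / 2) ^ 2 / 2) * S₀)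
      θ := by
  have hu : 0 < σ * √(2 * θ) := mul_pos hσ (sqrt_pos.2 (by linarith))
  have hcos : cos (σ * √(2 * θ) / 2) ≠ 0 := by
    refine (cos_pos_of_mem_Ioo ⟨?_, ?_⟩).ne'
    · linarith [pi_pos]
    · linarith [mul_sqrt_two_mul_lt_pi hσ hθb]
  have hbranch := hasDerivAt_sqrtBranch hσ.ne' hθ (hasDerivAt_tan hcos)
  refine (hbranch.mul_const S₀).congr_of_eventuallyEq ?_
  filter_upwards [lt_mem_nhds hθ] with x hx
  exact cumulantSqrt_of_nonneg hx.le

theorem differentiableAt_cumulantSqrt_of_neg (hσ : σ ≠ 0) (hθ : θ < 0) :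
    DifferentiableAt ℝ (cumulantSqrt σ S₀) θ := by
  have hbranch : DifferentiableAt ℝ (sqrtBranch tanh σ) (-θ) :=
    (hasDerivAt_sqrtBranch hσ (neg_pos.2 hθ) (hasDerivAt_tanh _)).differentiableAt
  refine ((hbranch.comp θ differentiableAt_id.neg).mul_const S₀).neg.congr_of_eventuallyEq ?_
  filter_upwards [gt_mem_nhds hθ] with x hx
  exact cumulantSqrt_of_neg hx

theorem tendsto_deriv_cumulantSqrt_atTop (hσ : 0 < σ) (hS₀ : 0 < S₀) :
    Tendsto (deriv (cumulantSqrt σ S₀)) (𝓝[<] (π ^ 2 / (2 * σ ^ 2))) atTop := by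
  set b := π ^ 2 / (2 * σ ^ 2)
  have hangle : Tendsto (fun θ => σ * √(2 * θ) / 2) (𝓝[<] b) (𝓝[<] (π / 2)) := by
    refine tendsto_nhdsWithin_of_tendsto_nhds_of_eventually_within _ ?_ ?_
    · have h : Continuous fun θ : ℝ => σ * √(2 * θ) / 2 := by fun_prop
      have := h.continuousWithinAt.tendsto (x := b) (s := Set.Iio b)
      rwa [mul_sqrt_two_mul_eq_pi hσ] at this
    · filter_upwards [self_mem_nhdsWithin] with θ (hθ : θ < b)
      exact (by linarith [mul_sqrt_two_mul_lt_pi hσ hθ] : σ * √(2 * θ) / 2 < π / 2)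
  have htan := (tendsto_tan_pi_div_two.comp hangle).atTop_mul_const (div_pos hS₀ pi_pos)
  refine tendsto_atTop_mono' _ ?_ htan
  have hb : 0 < b := by positivity
  filter_upwards [Ioo_mem_nhdsLT hb] with θ ⟨hθ, hθb⟩
  rw [(hasDerivAt_cumulantSqrt_of_pos hσ hθ hθb).deriv, Function.comp_apply]
  have hu : 0 < σ * √(2 * θ) := mul_pos hσ (sqrt_pos.2 (by linarith))
  have htan_pos : 0 < tan (σ * √(2 * θ) / 2) := by
    refine tan_pos_of_pos_of_lt_pi_div_two (by positivity) ?_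
    linarith [mul_sqrt_two_mul_lt_pi hσ hθb]
  calc tan (σ * √(2 * θ) / 2) * (S₀ / π)
      = tan (σ * √(2 * θ) / 2) / π * S₀ := by ring
    _ ≤ tan (σ * √(2 * θ) / 2) / (σ * √(2 * θ)) * S₀ := by
      gcongr
      exact (mul_sqrt_two_mul_lt_pi hσ hθb).le
    _ ≤ _ := by gcongr; exact le_add_of_nonneg_right (by positivity)

end

theorem stmt5 (σ S₀ : ℝ) (hσ : 0 < σ) (hS₀ : 0 < S₀) :
    (∀ θ : ℝ, θ < π ^ 2 / (2 * σ ^ 2) → DifferentiableAt ℝ (cumulantSqrt σ S₀) θ) ∧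
    Tendsto (deriv (cumulantSqrt σ S₀)) (nhdsWithin (π ^ 2 / (2 * σ ^ 2)) (Set.Iio (π ^ 2 / (2 * σ ^ 2)))) atTop := by
  refine ⟨fun θ hθ => ?_, tendsto_deriv_cumulantSqrt_atTop hσ hS₀⟩
  rcases lt_trichotomy θ 0 with hneg | rfl | hpos
  · exact differentiableAt_cumulantSqrt_of_neg hσ.ne' hneg
  · exact (hasDerivAt_cumulantSqrt_zero hσ.ne').differentiableAt
  · exact (hasDerivAt_cumulantSqrt_of_pos hσ hpos hθ).differentiableAt
end

section
/- Suppose x ≥ 0, θ satisfies 2x² = −θσ² (i.e. x = √(−θσ²/2)), and Λ(θ) = −(S₀/σ²)√(−2θσ²)·tanh(√(−θσ²/2)). If K/S₀ = (1/(2cosh²x))(1 + sinh(2x)/(2x)), then θK − Λ(θ) = (S₀/σ²)·(x²/cosh²x)·(sinh(2x)/(2x) − 1). -/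
open Real

theorem stmt12 (σ S₀ θ K x Λ : ℝ) (hσ : 0 < σ) (hS₀ : 0 < S₀) (hθ : θ ≤ 0)
    (hx : 0 ≤ x) (hxθ : 2 * x ^ 2 = -θ * σ ^ 2)
    (hΛ : Λ = -(S₀ / σ ^ 2) * Real.sqrt (-2 * θ * σ ^ 2) *
      Real.tanh (Real.sqrt (-θ * σ ^ 2 / 2)))
    (hK : K / S₀ = 1 / (2 * Real.cosh x ^ 2) * (1 + Real.sinh (2 * x) / (2 * x))) :
    θ * K - Λ =
      S₀ / σ ^ 2 * (x ^ 2 / Real.cosh x ^ 2) * (Real.sinh (2 * x) / (2 * x) - 1) := by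
  have hK' : K = S₀ * (1 / (2 * Real.cosh x ^ 2) * (1 + Real.sinh (2 * x) / (2 * x))) := by
    rw [← hK]; field_simp
  rcases eq_or_lt_of_le hx with h0 | h0
  · -- x = 0
    have hθ0 : θ = 0 := by
      have hσ2 : (0:ℝ) < σ ^ 2 := by positivity
      nlinarith [hxθ]
    subst hθ0
    subst hΛ
    simp [← h0, hK']
  · -- x > 0
    have hθx : θ = -(2 * x ^ 2) / σ ^ 2 := by
      have hσ2 : (σ:ℝ) ^ 2 ≠ 0 := by positivity
      field_simp
      linarith [hxθ]
    have h1 : -2 * θ * σ ^ 2 = (2 * x) ^ 2 := by nlinarith [hxθ]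
    have h2 : -θ * σ ^ 2 / 2 = x ^ 2 := by nlinarith [hxθ]
    have hs1 : Real.sqrt (-2 * θ * σ ^ 2) = 2 * x := by
      rw [h1, Real.sqrt_sq (by linarith)]
    have hs2 : Real.sqrt (-θ * σ ^ 2 / 2) = x := by
      rw [h2, Real.sqrt_sq hx]
    rw [hΛ, hs1, hs2, hθx, hK']
    have hsinh2 : Real.sinh (2 * x) = 2 * Real.sinh x * Real.cosh x := by
      rw [two_mul, Real.sinh_add]; ring
    rw [hsinh2, Real.tanh_eq_sinh_div_cosh]
    have hc : Real.cosh x ≠ 0 := ne_of_gt (Real.cosh_pos (x := x))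
    have hσ2 : (σ:ℝ) ^ 2 ≠ 0 := by positivity
    field_simp
    ring
end

section
/- Suppose 0 ≤ x < π/2, θ satisfies 2x² = θσ², and Λ(θ) = (S₀/σ²)√(2θσ²)·tan(√(θσ²/2)). If K/S₀ = (1/(2cos²x))(1 + sin(2x)/(2x)), then θK − Λ(θ) = (S₀/σ²)·(x²/cos²x)·(1 − sin(2x)/(2x)). -/
open Real

theorem stmt13 (σ S₀ θ K x Λ : ℝ) (hσ : 0 < σ) (hS₀ : 0 < S₀)
    (hx0 : 0 ≤ x) (hx1 : x < π / 2) (hxθ : 2 * x ^ 2 = θ * σ ^ 2)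
    (hΛ : Λ = S₀ / σ ^ 2 * Real.sqrt (2 * θ * σ ^ 2) *
      Real.tan (Real.sqrt (θ * σ ^ 2 / 2)))
    (hK : K / S₀ = 1 / (2 * Real.cos x ^ 2) * (1 + Real.sin (2 * x) / (2 * x))) :
    θ * K - Λ =
      S₀ / σ ^ 2 * (x ^ 2 / Real.cos x ^ 2) * (1 - Real.sin (2 * x) / (2 * x)) := by
  have hσ2 : (σ:ℝ)^2 ≠ 0 := by positivity
  have hcos : 0 < Real.cos x := Real.cos_pos_of_mem_Ioo
    ⟨by linarith [Real.pi_pos], hx1⟩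
  have h1 : 2 * θ * σ^2 = (2*x)^2 := by nlinarith [hxθ]
  have h2 : θ * σ^2 / 2 = x^2 := by nlinarith [hxθ]
  have hs1 : Real.sqrt (2*θ*σ^2) = 2*x := by
    rw [h1, Real.sqrt_sq (by linarith)]
  have hs2 : Real.sqrt (θ*σ^2/2) = x := by rw [h2, Real.sqrt_sq hx0]
  have hK' : K = 1 / (2 * Real.cos x ^ 2) * (1 + Real.sin (2 * x) / (2 * x)) * S₀ :=
    (div_eq_iff hS₀.ne').mp hK
  have hθ : θ = 2 * x^2 / σ^2 := by field_simp; linarith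
  rw [hΛ, hs1, hs2, hK', hθ, Real.tan_eq_sin_div_cos]
  rcases eq_or_lt_of_le hx0 with h0 | h0
  · rw [← h0]; simp
  · rw [Real.sin_two_mul]
    field_simp
    ring
end
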